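/- Let R be a 2-torsion free commutative ring with identity and n ≥ 1. Then every Jordan derivation of the upper triangular matrix algebra Tₙ(R) is a derivation. -/

import Mathlib

/-!
Write `Δ(x, y) = d (x * y) - (d x * y + x * d y)` (`leibnizDefect`), a biadditive map: `d` is a
Jordan derivation when `Δ` vanishes on the diagonal, so that `Δ` is skew, and a derivation when
`Δ = 0`. The matrix unit `e = E₀₀` is an idempotent of `U = Tₙ(R)` with `(1 - e) U e = 0`,
whose corner `e U e ≅ R` is commutative and whose bimodule `e U (1 - e)` acts faithfully on
`(1 - e) U (1 - e)`.

Adding an inner derivation, which does not change `Δ`, makes `d e = 0`. Herstein's identity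
`d (a * b * a) = d a * b * a + a * d b * a + a * b * d a` (valid since `U` is 2-torsion free) then
gives `Δ(x, e) = Δ(e, x) = 0`, and the cocycle identity for `Δ` lets `e` and `1 - e` pass through
it, reducing `Δ = 0` to the Peirce corners. `Δ` vanishes on `e U e × e U e` by commutativity and
2-torsion freeness, on the mixed corners because `Δ` is skew and, with the arguments swapped, an
idempotent can be moved across to produce a factor `(1 - e) * e = 0`, and on `(1 - e) U (1 - e)`
because the cocycle identity shows that `e U (1 - e)` annihilates it there.
-/

open Matrix

/-- The `R`-subalgebra of `n × n` upper triangular matrices. -/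
def upperTriangular (n : ℕ) (R : Type*) [CommRing R] :
    Subalgebra R (Matrix (Fin n) (Fin n) R) where
  carrier := {M | M.BlockTriangular id}
  mul_mem' hM hN := hM.mul hN
  add_mem' hM hN := hM.add hN
  algebraMap_mem' r := by
    intro i j hij
    simp only [Matrix.algebraMap_matrix_apply]
    exact if_neg (fun h => absurd h (ne_of_gt hij))
section LeibnizDefect

variable {U : Type*} [Ring U]

def leibnizDefect (d : U →+ U) : U →+ U →+ U :=
  AddMonoidHom.mk'
    (fun x => AddMonoidHom.mk' (fun y => d (x * y) - (d x * y + x * d y))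
      (fun y y' => by simp only [mul_add, map_add]; abel))
    (fun x x' => by
      ext y
      simp only [add_mul, map_add, AddMonoidHom.mk'_apply, AddMonoidHom.add_apply]
      abel)

@[simp]
lemma leibnizDefect_apply (d : U →+ U) (x y : U) :
    leibnizDefect d x y = d (x * y) - (d x * y + x * d y) := rfl

lemma leibnizDefect_add_commutator (d : U →+ U) (c : U) :
    leibnizDefect (d + (AddMonoidHom.mulLeft c - AddMonoidHom.mulRight c)) = leibnizDefect d := by
  ext x y
  simp only [leibnizDefect_apply, AddMonoidHom.add_apply, AddMonoidHom.sub_apply,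
    AddMonoidHom.coe_mulLeft, AddMonoidHom.coe_mulRight]
  noncomm_ring

lemma leibnizDefect_mul_sub_leibnizDefect_mul (d : U →+ U) (x y z : U) :
    leibnizDefect d (x * y) z - leibnizDefect d x (y * z) =
      x * leibnizDefect d y z - leibnizDefect d x y * z := by
  simp only [leibnizDefect_apply]
  noncomm_ring

variable {d : U →+ U}

lemma leibnizDefect_mul_left {p : U} (hp : ∀ z, leibnizDefect d p z = 0) (x y : U) :
    leibnizDefect d (p * x) y = p * leibnizDefect d x y := by
  have h := leibnizDefect_mul_sub_leibnizDefect_mul d p x y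
  rwa [hp, hp, zero_mul, sub_zero, sub_zero] at h

lemma leibnizDefect_mul_right {p : U} (hp : ∀ z, leibnizDefect d z p = 0) (x y : U) :
    leibnizDefect d x (y * p) = leibnizDefect d x y * p := by
  have h := leibnizDefect_mul_sub_leibnizDefect_mul d x y p
  rwa [hp, hp, mul_zero, zero_sub, zero_sub, neg_inj] at h

lemma leibnizDefect_mul_left_eq_mul_right {x p y : U} (hx : leibnizDefect d x p = 0)
    (hy : leibnizDefect d p y = 0) :
    leibnizDefect d (x * p) y = leibnizDefect d x (p * y) := by
  have h := leibnizDefect_mul_sub_leibnizDefect_mul d x p y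
  rwa [hx, hy, mul_zero, zero_mul, sub_zero, sub_eq_zero] at h

def IsJordanDerivation (d : U →+ U) : Prop :=
  ∀ a, leibnizDefect d a a = 0

namespace IsJordanDerivation

variable (hd : IsJordanDerivation d)
include hd

lemma leibnizDefect_add_swap (x y : U) : leibnizDefect d x y + leibnizDefect d y x = 0 := by
  have h := hd (x + y)
  simpa only [map_add, AddMonoidHom.add_apply, hd x, hd y, zero_add, add_zero, add_comm] using h

lemma map_one : d 1 = 0 := by
  simpa using hd 1

lemma map_mul_add_mul (x y : U) :
    d (x * y + y * x) = d x * y + x * d y + (d y * x + y * d x) := by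
  have h := hd.leibnizDefect_add_swap x y
  rw [map_add, ← sub_eq_zero, ← h, leibnizDefect_apply, leibnizDefect_apply]
  noncomm_ring

lemma map_mul_mul (htf : ∀ x : U, x + x = 0 → x = 0) (a b : U) :
    d (a * b * a) = d a * b * a + a * d b * a + a * b * d a := by
  have hsq : d (a * a) = d a * a + a * d a := sub_eq_zero.mp (hd a)
  have h := hd.map_mul_add_mul a (a * b + b * a)
  rw [show a * (a * b + b * a) + (a * b + b * a) * a =
      (a * a * b + b * (a * a)) + (a * b * a + a * b * a) by noncomm_ring,
    map_add d (a * a * b + b * (a * a)), map_add d (a * b * a), hd.map_mul_add_mul (a * a),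
    hsq, hd.map_mul_add_mul a b] at h
  refine sub_eq_zero.mp (htf _ ?_)
  rw [← sub_eq_zero_of_eq h]
  noncomm_ring

end IsJordanDerivation

section Triangular

variable {e : U} (hd : IsJordanDerivation d) (htf : ∀ x : U, x + x = 0 → x = 0)
  (he : IsIdempotentElem e) (htri : ∀ x, (1 - e) * x * e = 0) (hde : d e = 0)
  (hcomm : ∀ x y, Commute (e * x * e) (e * y * e))
  (hfaith : ∀ z, (∀ w, e * w * (1 - e) * z = 0) → (1 - e) * z * (1 - e) = 0)

include htri in
lemma mul_idem_eq_of_triangular (x : U) :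
    x * e = e * x * e := by
  rw [← sub_eq_zero, ← htri x]
  noncomm_ring

include htri in
lemma one_sub_idem_mul_eq_of_triangular (x : U) :
    (1 - e) * x = (1 - e) * x * (1 - e) := by
  rw [mul_sub, mul_one, htri, sub_zero]

namespace IsJordanDerivation

include hd he htri in
lemma add_commutator_apply_idem :
    (d + (AddMonoidHom.mulLeft (d e) - AddMonoidHom.mulRight (d e))) e = 0 := by
  have hsq : d e = d e * e + e * d e := by
    simpa only [he.eq] using sub_eq_zero.mp (hd e)
  have hmid : e * d e * e = 0 := by
    have h : e * d e * e = e * d e * e + e * d e * e := calc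
      e * d e * e = e * (d e * e + e * d e) * e := by rw [← hsq]
      _ = e * d e * (e * e) + e * e * d e * e := by noncomm_ring
      _ = e * d e * e + e * d e * e := by rw [he.eq]
    simpa using h
  have hright : d e * e = 0 := calc
    d e * e = e * d e * e + (1 - e) * d e * e := by noncomm_ring
    _ = 0 := by rw [hmid, htri, add_zero]
  simp only [AddMonoidHom.add_apply, AddMonoidHom.sub_apply, AddMonoidHom.coe_mulLeft,
    AddMonoidHom.coe_mulRight, hright, zero_sub]
  rw [hright, zero_add] at hsq
  rw [← hsq, add_neg_cancel]

include hd htf htri hde in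
lemma leibnizDefect_idem_right (x : U) : leibnizDefect d x e = 0 := by
  have h := hd.map_mul_mul htf e x
  simp only [hde, zero_mul, mul_zero, zero_add, add_zero] at h
  rw [← mul_idem_eq_of_triangular htri, ← mul_idem_eq_of_triangular htri] at h
  rw [leibnizDefect_apply, h, hde, mul_zero, add_zero, sub_self]

include hd htf htri hde in
lemma leibnizDefect_idem_left (x : U) : leibnizDefect d e x = 0 := by
  have h := hd.leibnizDefect_add_swap x e
  rwa [leibnizDefect_idem_right hd htf htri hde, zero_add] at h

include hd htf htri hde in
lemma leibnizDefect_one_sub_idem_right (x : U) : leibnizDefect d x (1 - e) = 0 := by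
  rw [map_sub, leibnizDefect_idem_right hd htf htri hde, sub_zero, leibnizDefect_apply, mul_one,
    mul_one, hd.map_one, mul_zero, add_zero, sub_self]

include hd htf htri hde in
lemma leibnizDefect_one_sub_idem_left (x : U) : leibnizDefect d (1 - e) x = 0 := by
  rw [map_sub, AddMonoidHom.sub_apply, leibnizDefect_idem_left hd htf htri hde, sub_zero,
    leibnizDefect_apply, one_mul, one_mul, hd.map_one, zero_mul, zero_add, sub_self]

include hd htf htri hde in
lemma map_idem_mul_mul_idem (x : U) : d (e * x * e) = e * d x * e := by
  have hleft := leibnizDefect_idem_left hd htf htri hde (x * e)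
  have hright := leibnizDefect_idem_right hd htf htri hde x
  rw [leibnizDefect_apply, hde, zero_mul, zero_add, sub_eq_zero] at hleft
  rw [leibnizDefect_apply, hde, mul_zero, add_zero, sub_eq_zero] at hright
  rw [mul_assoc, hleft, hright, mul_assoc]

include hd htf htri hde hcomm in
lemma leibnizDefect_corner_idem_idem (x y : U) :
    leibnizDefect d (e * x * e) (e * y * e) = 0 := by
  have hswap :
      leibnizDefect d (e * y * e) (e * x * e) = leibnizDefect d (e * x * e) (e * y * e) := by
    simp only [leibnizDefect_apply, map_idem_mul_mul_idem hd htf htri hde]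
    rw [(hcomm y x).eq, (hcomm (d y) x).eq, (hcomm y (d x)).eq, add_comm]
  have h := hd.leibnizDefect_add_swap (e * x * e) (e * y * e)
  rw [hswap] at h
  exact htf _ h

include hd htf he htri hde in
lemma leibnizDefect_corner_idem_offDiag (x y : U) :
    leibnizDefect d (e * x * e) (e * y * (1 - e)) = 0 := by
  have hzero : (1 - e) * (e * x * e) = 0 := by
    rw [← mul_assoc, ← mul_assoc, he.one_sub_mul_self, zero_mul, zero_mul]
  have h := hd.leibnizDefect_add_swap (e * x * e) (e * y * (1 - e))
  rwa [leibnizDefect_mul_left_eq_mul_right (leibnizDefect_one_sub_idem_right hd htf htri hde _)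
    (leibnizDefect_one_sub_idem_left hd htf htri hde _), hzero, map_zero, add_zero] at h

include hd htf he htri hde in
lemma leibnizDefect_corner_offDiag_one_sub (x y : U) :
    leibnizDefect d (e * x * (1 - e)) ((1 - e) * y * (1 - e)) = 0 := by
  have hzero : (1 - e) * y * (1 - e) * e = 0 := by
    rw [mul_assoc, he.one_sub_mul_self, mul_zero]
  have hswap : leibnizDefect d ((1 - e) * y * (1 - e)) (e * x * (1 - e)) = 0 := by
    rw [mul_assoc e, ← leibnizDefect_mul_left_eq_mul_right
      (leibnizDefect_idem_right hd htf htri hde _) (leibnizDefect_idem_left hd htf htri hde _),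
      hzero, map_zero, AddMonoidHom.zero_apply]
  have h := hd.leibnizDefect_add_swap (e * x * (1 - e)) ((1 - e) * y * (1 - e))
  rwa [hswap, add_zero] at h

include hd htf he htri hde hfaith in
lemma leibnizDefect_corner_one_sub_one_sub (x y : U) :
    leibnizDefect d ((1 - e) * x * (1 - e)) ((1 - e) * y * (1 - e)) = 0 := by
  set b := (1 - e) * x * (1 - e)
  set c := (1 - e) * y * (1 - e)
  have hcorner : leibnizDefect d b c = (1 - e) * leibnizDefect d b c * (1 - e) := calc
    leibnizDefect d b c = leibnizDefect d ((1 - e) * b) (c * (1 - e)) := by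
      simp only [b, c, ← mul_assoc, he.one_sub.eq]
      simp only [mul_assoc, he.one_sub.eq]
    _ = (1 - e) * leibnizDefect d b c * (1 - e) := by
      rw [leibnizDefect_mul_left (leibnizDefect_one_sub_idem_left hd htf htri hde),
        leibnizDefect_mul_right (leibnizDefect_one_sub_idem_right hd htf htri hde), mul_assoc]
  have hann (w : U) : e * w * (1 - e) * leibnizDefect d b c = 0 := by
    have h := leibnizDefect_mul_sub_leibnizDefect_mul d (e * w * (1 - e)) b c
    rw [show e * w * (1 - e) * b = e * (w * (1 - e) * (1 - e) * x) * (1 - e) by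
        simp only [b, mul_assoc],
      show b * c = (1 - e) * (x * (1 - e) * (1 - e) * y) * (1 - e) by simp only [b, c, mul_assoc],
      leibnizDefect_corner_offDiag_one_sub hd htf he htri hde,
      leibnizDefect_corner_offDiag_one_sub hd htf he htri hde,
      leibnizDefect_corner_offDiag_one_sub hd htf he htri hde, zero_mul, sub_zero, sub_zero] at h
    exact h.symm
  rw [hcorner]
  exact hfaith _ hann

include hd htf he htri hde hcomm in
lemma leibnizDefect_mul_idem_left (x y : U) :
    leibnizDefect d (x * e) y = 0 := calc
  leibnizDefect d (x * e) y = leibnizDefect d (e * x * e * e) y := by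
    rw [mul_assoc (e * x), he.eq, ← mul_idem_eq_of_triangular htri]
  _ = leibnizDefect d (e * x * e) (e * y) :=
    leibnizDefect_mul_left_eq_mul_right (leibnizDefect_idem_right hd htf htri hde _)
      (leibnizDefect_idem_left hd htf htri hde _)
  _ = leibnizDefect d (e * x * e) (e * y * e + e * y * (1 - e)) := by
    rw [← mul_add, add_sub_cancel, mul_one]
  _ = 0 := by
    rw [map_add, leibnizDefect_corner_idem_idem hd htf htri hde hcomm,
      leibnizDefect_corner_idem_offDiag hd htf he htri hde, add_zero]

include hd htf he htri hde hfaith in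
lemma leibnizDefect_one_sub_idem_mul_right (x y : U) :
    leibnizDefect d x ((1 - e) * y) = 0 := calc
  leibnizDefect d x ((1 - e) * y) = leibnizDefect d x ((1 - e) * ((1 - e) * y * (1 - e))) := by
    rw [← mul_assoc, ← mul_assoc, he.one_sub.eq, ← one_sub_idem_mul_eq_of_triangular htri]
  _ = leibnizDefect d (x * (1 - e)) ((1 - e) * y * (1 - e)) :=
    (leibnizDefect_mul_left_eq_mul_right (leibnizDefect_one_sub_idem_right hd htf htri hde _)
      (leibnizDefect_one_sub_idem_left hd htf htri hde _)).symm
  _ = leibnizDefect d (e * x * (1 - e) + (1 - e) * x * (1 - e)) ((1 - e) * y * (1 - e)) := by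
    rw [← add_mul, ← add_mul, add_sub_cancel, one_mul]
  _ = 0 := by
    rw [map_add, AddMonoidHom.add_apply, leibnizDefect_corner_offDiag_one_sub hd htf he htri hde,
      leibnizDefect_corner_one_sub_one_sub hd htf he htri hde hfaith, add_zero]

include hd htf he htri hde hcomm hfaith in
lemma leibnizDefect_eq_zero_of_map_idem_eq_zero (x y : U) :
    leibnizDefect d x y = 0 := calc
  leibnizDefect d x y = leibnizDefect d x (e * y + (1 - e) * y) := by
    rw [← add_mul, add_sub_cancel, one_mul]
  _ = leibnizDefect d (x * e) y + leibnizDefect d x ((1 - e) * y) := by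
    rw [map_add, leibnizDefect_mul_left_eq_mul_right (leibnizDefect_idem_right hd htf htri hde _)
      (leibnizDefect_idem_left hd htf htri hde _)]
  _ = 0 := by
    rw [leibnizDefect_mul_idem_left hd htf he htri hde hcomm,
      leibnizDefect_one_sub_idem_mul_right hd htf he htri hde hfaith, add_zero]

include hd htf he htri hcomm hfaith in
theorem leibnizDefect_eq_zero_of_triangular (x y : U) :
    leibnizDefect d x y = 0 := by
  have hΔ := leibnizDefect_add_commutator d (d e)
  have hd' : IsJordanDerivation (d + (AddMonoidHom.mulLeft (d e) - AddMonoidHom.mulRight (d e))) :=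
    fun a => by rw [hΔ]; exact hd a
  rw [← hΔ]
  exact leibnizDefect_eq_zero_of_map_idem_eq_zero hd' htf he htri
    (hd.add_commutator_apply_idem he htri) hcomm hfaith x y

end IsJordanDerivation

end Triangular

end LeibnizDefect

namespace Matrix

variable {ι R : Type*} [Fintype ι] [DecidableEq ι]

lemma BlockTriangular.one_sub_single_mul_mul_single [PartialOrder ι] [Ring R]
    {M : Matrix ι ι R} (hM : M.BlockTriangular id) {i₀ : ι} (hi₀ : IsBot i₀) :
    (1 - single i₀ i₀ 1) * M * single i₀ i₀ 1 = 0 := by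
  ext i j
  by_cases hj : j = i₀
  · by_cases hi : i = i₀
    · simp [sub_mul, hi, hj]
    · simp [sub_mul, hi, hj, hM (lt_of_le_of_ne (hi₀ i) (Ne.symm hi))]
  · simp [sub_mul, hj]

lemma commute_single_mul_mul_single [CommRing R] (i : ι) (M N : Matrix ι ι R) :
    Commute (single i i 1 * M * single i i 1) (single i i 1 * N * single i i 1) := by
  simp only [Commute, SemiconjBy, single_mul_mul_single, single_mul_single_same, mul_one, mul_comm]

lemma one_sub_single_mul_eq_zero [Ring R] {i₀ : ι} {Z : Matrix ι ι R}
    (hZ : ∀ k, k ≠ i₀ → single i₀ k 1 * Z = 0) : (1 - single i₀ i₀ 1) * Z = 0 := by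
  ext i j
  by_cases hi : i = i₀
  · simp [sub_mul, hi]
  · simpa [sub_mul, hi] using congr_fun₂ (hZ i hi) i₀ j

end Matrix

namespace upperTriangular

variable {n : ℕ} {R : Type*} [CommRing R]

def single (i j : Fin n) (hij : i ≤ j) (c : R) : upperTriangular n R :=
  ⟨Matrix.single i j c, blockTriangular_single hij c⟩

@[simp]
lemma coe_single (i j : Fin n) (hij : i ≤ j) (c : R) :
    (single i j hij c : Matrix (Fin n) (Fin n) R) = Matrix.single i j c := rfl

lemma eq_zero_of_add_self_eq_zero (h2 : ∀ x : R, x + x = 0 → x = 0) (x : upperTriangular n R)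
    (hx : x + x = 0) : x = 0 := by
  apply Subtype.ext
  ext i j
  have h := congr_fun₂ (congr_arg Subtype.val hx) i j
  simp only [Subalgebra.coe_add, Matrix.add_apply, Subalgebra.coe_zero, Matrix.zero_apply] at h
  exact h2 _ h

lemma isIdempotentElem_single (i : Fin n) : IsIdempotentElem (single i i le_rfl (1 : R)) :=
  Subtype.ext (by simp [single_mul_single_same])

variable {i₀ : Fin n}

lemma one_sub_single_mul_mul_single (hi₀ : IsBot i₀) (x : upperTriangular n R) :
    (1 - single i₀ i₀ le_rfl 1) * x * single i₀ i₀ le_rfl 1 = 0 :=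
  Subtype.ext (by
    simp only [Subalgebra.coe_mul, Subalgebra.coe_sub, Subalgebra.coe_one, coe_single,
      Subalgebra.coe_zero]
    exact x.2.one_sub_single_mul_mul_single hi₀)

lemma commute_single_mul_mul_single (x y : upperTriangular n R) :
    Commute (single i₀ i₀ le_rfl 1 * x * single i₀ i₀ le_rfl 1)
      (single i₀ i₀ le_rfl 1 * y * single i₀ i₀ le_rfl 1) := by
  unfold Commute SemiconjBy
  apply Subtype.ext
  simp only [Subalgebra.coe_mul, coe_single]
  exact (Matrix.commute_single_mul_mul_single i₀ (x : Matrix (Fin n) (Fin n) R) y).eq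

lemma one_sub_single_mul_mul_one_sub_single_eq_zero (hi₀ : IsBot i₀) (z : upperTriangular n R)
    (hz : ∀ w, single i₀ i₀ le_rfl 1 * w * (1 - single i₀ i₀ le_rfl 1) * z = 0) :
    (1 - single i₀ i₀ le_rfl 1) * z * (1 - single i₀ i₀ le_rfl 1) = 0 := by
  have hrows (k : Fin n) (hk : k ≠ i₀) :
      Matrix.single i₀ k 1 * (z : Matrix (Fin n) (Fin n) R) = 0 := by
    have h := congr_arg Subtype.val (hz (single i₀ k (hi₀ k) 1))
    simp only [Subalgebra.coe_mul, Subalgebra.coe_sub, Subalgebra.coe_one, coe_single,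
      Subalgebra.coe_zero] at h
    rwa [single_mul_single_same, one_mul, mul_sub, mul_one, single_mul_single_of_ne (h := hk),
      sub_zero] at h
  apply Subtype.ext
  simp only [Subalgebra.coe_mul, Subalgebra.coe_sub, Subalgebra.coe_one, coe_single,
    Subalgebra.coe_zero]
  rw [Matrix.one_sub_single_mul_eq_zero hrows, zero_mul]

end upperTriangular

/-- Every Jordan derivation of the upper triangular matrix algebra `Tₙ(R)` over a
2-torsion free commutative ring `R` with identity is a derivation. -/
theorem stmt_9 {R : Type*} [CommRing R]
    (h2 : ∀ x : R, x + x = 0 → x = 0)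
    (n : ℕ) (hn : 1 ≤ n)
    (τ : upperTriangular n R →ₗ[R] upperTriangular n R)
    (hτ : ∀ a, τ (a * a) = τ a * a + a * τ a) :
    ∀ a b, τ (a * b) = τ a * b + a * τ b := by
  have hbot : IsBot (⟨0, hn⟩ : Fin n) := fun k => Fin.mk_le_of_le_val (Nat.zero_le k)
  have hd : IsJordanDerivation τ.toAddMonoidHom := fun a => sub_eq_zero.mpr (hτ a)
  intro a b
  exact sub_eq_zero.mp <| hd.leibnizDefect_eq_zero_of_triangular
    (upperTriangular.eq_zero_of_add_self_eq_zero h2) (upperTriangular.isIdempotentElem_single _)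
    (upperTriangular.one_sub_single_mul_mul_single hbot)
    upperTriangular.commute_single_mul_mul_single
    (upperTriangular.one_sub_single_mul_mul_one_sub_single_eq_zero hbot) a b
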